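/- Let G₁ and G₂ be finite connected simple graphs with k₁ and k₂ peripheral vertices respectively. Then PWW(G₁ □ G₂) = k₂²·PWW(G₁) + k₁²·PWW(G₂) + 2·PW(G₁)·PW(G₂). -/

import Mathlib

open Finset SimpleGraph

noncomputable section

/-- Eccentricity of a vertex: maximum distance to any vertex. -/
def ecc {V : Type*} [Fintype V] (G : SimpleGraph V) (u : V) : ℕ :=
  Finset.univ.sup (G.dist u)

/-- Diameter: maximum eccentricity. -/
def gdiam {V : Type*} [Fintype V] (G : SimpleGraph V) : ℕ :=
  Finset.univ.sup (ecc G)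

/-- The set of peripheral vertices: vertices of maximum eccentricity. -/
def peri {V : Type*} [Fintype V] [DecidableEq V] (G : SimpleGraph V) : Finset V :=
  Finset.univ.filter (fun u => ecc G u = gdiam G)

/-- Wiener index: sum of distances over unordered pairs of distinct vertices. -/
def wiener {V : Type*} [Fintype V] [DecidableEq V] (G : SimpleGraph V) : ℚ :=
  (1/2) * ∑ p ∈ (Finset.univ : Finset V).offDiag, (G.dist p.1 p.2 : ℚ)

/-- Hyper-Wiener index. -/
def hyperWiener {V : Type*} [Fintype V] [DecidableEq V] (G : SimpleGraph V) : ℚ :=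
  (1/4) * ∑ p ∈ (Finset.univ : Finset V).offDiag,
    ((G.dist p.1 p.2 : ℚ) + (G.dist p.1 p.2 : ℚ) ^ 2)

/-- Peripheral Wiener index. -/
def periWiener {V : Type*} [Fintype V] [DecidableEq V] (G : SimpleGraph V) : ℚ :=
  (1/2) * ∑ p ∈ (peri G).offDiag, (G.dist p.1 p.2 : ℚ)

/-- Peripheral hyper-Wiener index. -/
def periHyperWiener {V : Type*} [Fintype V] [DecidableEq V] (G : SimpleGraph V) : ℚ :=
  (1/4) * ∑ p ∈ (peri G).offDiag,
    ((G.dist p.1 p.2 : ℚ) + (G.dist p.1 p.2 : ℚ) ^ 2)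

end


/-!
Distances in `G □ H` add coordinatewise, so eccentricities and the diameter add as well, and a
vertex of `G □ H` is peripheral exactly when both of its coordinates are. The peripheral pairs of
`G □ H` are therefore the pairs of elements of `Peri G × Peri H`, and summing
`(d₁ + d₂) + (d₁ + d₂)² = (d₁ + d₁²) + (d₂ + d₂²) + 2 d₁ d₂` over them gives the identity: the
first two terms are summed over `k₂²` (resp. `k₁²`) copies of the peripheral pairs of one factor,
and the cross term factors as a product of the two sums.
-/

namespace SimpleGraph

variable {α β : Type*} {G : SimpleGraph α} {H : SimpleGraph β}

theorem dist_boxProd {x y : α × β} (h₁ : G.Reachable x.1 y.1) (h₂ : H.Reachable x.2 y.2) :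
    (G □ H).dist x y = G.dist x.1 y.1 + H.dist x.2 y.2 := by
  rw [dist, dist, dist, edist_boxProd,
    ENat.toNat_add (edist_ne_top_iff_reachable.mpr h₁) (edist_ne_top_iff_reachable.mpr h₂)]

variable [Fintype α] [Fintype β]

theorem ecc_boxProd (hG : G.Connected) (hH : H.Connected) (x : α × β) :
    ecc (G □ H) x = ecc G x.1 + ecc H x.2 := by
  have := hG.nonempty
  have := hH.nonempty
  simp only [ecc, sup_add_sup univ_nonempty univ_nonempty, univ_product_univ]
  exact congrArg _ (funext fun y => dist_boxProd (hG x.1 y.1) (hH x.2 y.2))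

theorem gdiam_boxProd (hG : G.Connected) (hH : H.Connected) :
    gdiam (G □ H) = gdiam G + gdiam H := by
  have := hG.nonempty
  have := hH.nonempty
  simp only [gdiam, sup_add_sup univ_nonempty univ_nonempty, univ_product_univ]
  exact congrArg _ (funext (ecc_boxProd hG hH))

theorem peri_boxProd [DecidableEq α] [DecidableEq β] (hG : G.Connected) (hH : H.Connected) :
    peri (G □ H) = peri G ×ˢ peri H := by
  ext ⟨a, b⟩
  have ha : ecc G a ≤ gdiam G := le_sup (mem_univ a)
  have hb : ecc H b ≤ gdiam H := le_sup (mem_univ b)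
  simp only [peri, mem_filter, mem_univ, true_and, mem_product, ecc_boxProd hG hH,
    gdiam_boxProd hG hH]
  omega

end SimpleGraph

namespace Finset

variable {ι κ M R : Type*}

theorem sum_offDiag_eq_sum_sum [DecidableEq ι] [AddCommMonoid M] (s : Finset ι)
    (f : ι → ι → M) (hf : ∀ a ∈ s, f a a = 0) :
    ∑ p ∈ s.offDiag, f p.1 p.2 = ∑ a ∈ s, ∑ b ∈ s, f a b := by
  rw [← sum_product' s s f, ← diag_union_offDiag, sum_union (disjoint_diag_offDiag s), sum_diag,
    sum_eq_zero hf, zero_add]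

variable [CommSemiring R] (S : Finset ι) (T : Finset κ)

theorem sum_sum_product_fst (f : ι → ι → R) :
    ∑ x ∈ S ×ˢ T, ∑ y ∈ S ×ˢ T, f x.1 y.1 = (#T : R) ^ 2 * ∑ a ∈ S, ∑ c ∈ S, f a c := by
  simp only [sum_product, sum_const, nsmul_eq_mul, mul_sum, sq, mul_assoc]

theorem sum_sum_product_snd (g : κ → κ → R) :
    ∑ x ∈ S ×ˢ T, ∑ y ∈ S ×ˢ T, g x.2 y.2 = (#S : R) ^ 2 * ∑ b ∈ T, ∑ d ∈ T, g b d := by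
  simp only [sum_product, sum_const, nsmul_eq_mul, mul_sum, sq, mul_assoc]

theorem sum_sum_product_mul (f : ι → ι → R) (g : κ → κ → R) :
    ∑ x ∈ S ×ˢ T, ∑ y ∈ S ×ˢ T, f x.1 y.1 * g x.2 y.2 =
      (∑ a ∈ S, ∑ c ∈ S, f a c) * ∑ b ∈ T, ∑ d ∈ T, g b d := by
  simp only [sum_product, sum_mul_sum]

theorem sum_sum_product_add_add_sq (f : ι → ι → R) (g : κ → κ → R) :
    ∑ x ∈ S ×ˢ T, ∑ y ∈ S ×ˢ T,
        (f x.1 y.1 + g x.2 y.2 + (f x.1 y.1 + g x.2 y.2) ^ 2) =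
      (#T : R) ^ 2 * ∑ a ∈ S, ∑ c ∈ S, (f a c + f a c ^ 2) +
        (#S : R) ^ 2 * ∑ b ∈ T, ∑ d ∈ T, (g b d + g b d ^ 2) +
        2 * ((∑ a ∈ S, ∑ c ∈ S, f a c) * ∑ b ∈ T, ∑ d ∈ T, g b d) := by
  rw [← sum_sum_product_fst S T, ← sum_sum_product_snd S T, ← sum_sum_product_mul]
  simp only [mul_sum, ← sum_add_distrib]
  exact sum_congr rfl fun x _ => sum_congr rfl fun y _ => by ring

end Finset

section PeripheralIndices

variable {V : Type*} [Fintype V] [DecidableEq V] (G : SimpleGraph V)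

theorem periWiener_eq_sum_sum :
    periWiener G = 1 / 2 * ∑ a ∈ peri G, ∑ b ∈ peri G, (G.dist a b : ℚ) := by
  rw [periWiener, sum_offDiag_eq_sum_sum _ (fun a b => (G.dist a b : ℚ)) (by simp)]

theorem periHyperWiener_eq_sum_sum :
    periHyperWiener G =
      1 / 4 * ∑ a ∈ peri G, ∑ b ∈ peri G, ((G.dist a b : ℚ) + (G.dist a b : ℚ) ^ 2) := by
  rw [periHyperWiener,
    sum_offDiag_eq_sum_sum _ (fun a b => (G.dist a b : ℚ) + (G.dist a b : ℚ) ^ 2) (by simp)]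

end PeripheralIndices

theorem pww_boxProd {V W : Type*} [Fintype V] [Fintype W] [DecidableEq V] [DecidableEq W]
    (G : SimpleGraph V) (H : SimpleGraph W) (hG : G.Connected) (hH : H.Connected)
    (k₁ k₂ : ℕ) (hk₁ : k₁ = (peri G).card) (hk₂ : k₂ = (peri H).card) :
    periHyperWiener (G.boxProd H) =
      (k₂ : ℚ) ^ 2 * periHyperWiener G + (k₁ : ℚ) ^ 2 * periHyperWiener H +
        2 * periWiener G * periWiener H := by
  subst hk₁ hk₂
  have hdist (x y : V × W) :
      ((G □ H).dist x y : ℚ) = G.dist x.1 y.1 + H.dist x.2 y.2 := by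
    rw [dist_boxProd (hG _ _) (hH _ _), Nat.cast_add]
  simp only [periHyperWiener_eq_sum_sum, periWiener_eq_sum_sum, peri_boxProd hG hH, hdist]
  rw [sum_sum_product_add_add_sq (peri G) (peri H) (fun a c => (G.dist a c : ℚ))
    (fun b d => (H.dist b d : ℚ))]
  ring
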